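/- arXiv:2004.11501 — 5 statements merged into one kernel-verified Lean document; each statement's English description precedes it below -/
import Mathlib

section
/- Let a < b and g : [a,b] → ℂ be integrable. If there exist θ₀ ∈ ℝ and η with 0 ≤ η < π/2 such that |arg(g(y)·e^{-iθ₀})| ≤ η for all y ∈ [a,b], then ∫_a^b g(y) dy = ρ·e^{i(θ₀+φ)} for some real numbers ρ and φ satisfying ρ ≥ cos(η)·∫_a^b |g(y)| dy and |φ| ≤ η. -/
/-!
Rotating by `e^{-iθ₀}` reduces to `θ₀ = 0`. For `0 ≤ η ≤ π`, the condition `|arg z| ≤ η` is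
equivalent to the linear inequality `cos η * ‖z‖ ≤ re z`, which integrates to
`cos η * ∫ ‖g‖ ≤ re ∫ g ≤ ‖∫ g‖`. When `cos η ≥ 0` this in turn gives
`cos η * ‖∫ g‖ ≤ re ∫ g`, i.e. `|arg ∫ g| ≤ η`; take `ρ = ‖∫ g‖` and `φ = arg ∫ g`.
-/

open MeasureTheory Real Set

namespace Complex

theorem abs_arg_le_iff_cos_mul_norm_le_re {z : ℂ} {η : ℝ} (hη0 : 0 ≤ η) (hηπ : η ≤ π) :
    |z.arg| ≤ η ↔ Real.cos η * ‖z‖ ≤ z.re := by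
  rcases eq_or_ne z 0 with rfl | hz
  · simp [hη0]
  have hre : z.re = ‖z‖ * Real.cos |z.arg| := by
    rw [Real.cos_abs, cos_arg hz, mul_div_cancel₀ _ (norm_ne_zero_iff.mpr hz)]
  rw [hre, mul_comm, mul_le_mul_iff_right₀ (norm_pos_iff.mpr hz),
    strictAntiOn_cos.le_iff_ge ⟨hη0, hηπ⟩ ⟨abs_nonneg _, abs_arg_le_pi z⟩]

variable {α : Type*} [MeasurableSpace α] {μ : Measure α} {f : α → ℂ}

theorem mul_integral_norm_le_re_integral (hf : Integrable f μ) {c : ℝ}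
    (h : ∀ᵐ x ∂μ, c * ‖f x‖ ≤ (f x).re) : c * ∫ x, ‖f x‖ ∂μ ≤ (∫ x, f x ∂μ).re := by
  rw [← integral_const_mul]
  exact (integral_mono_ae (hf.norm.const_mul c) hf.re h).trans_eq (integral_re hf)

theorem cos_mul_integral_norm_le_re_integral_of_abs_arg_le (hf : Integrable f μ) {η : ℝ}
    (hη0 : 0 ≤ η) (hηπ : η ≤ π) (h : ∀ᵐ x ∂μ, |(f x).arg| ≤ η) :
    Real.cos η * ∫ x, ‖f x‖ ∂μ ≤ (∫ x, f x ∂μ).re :=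
  mul_integral_norm_le_re_integral hf <|
    h.mono fun _ hx => (abs_arg_le_iff_cos_mul_norm_le_re hη0 hηπ).mp hx

theorem abs_arg_integral_le (hf : Integrable f μ) {η : ℝ} (hη0 : 0 ≤ η) (hη : η ≤ π / 2)
    (h : ∀ᵐ x ∂μ, |(f x).arg| ≤ η) : |(∫ x, f x ∂μ).arg| ≤ η := by
  have hηπ : η ≤ π := hη.trans (by linarith [pi_pos])
  have hcos : 0 ≤ Real.cos η := cos_nonneg_of_mem_Icc ⟨by linarith, hη⟩
  rw [abs_arg_le_iff_cos_mul_norm_le_re hη0 hηπ]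
  calc Real.cos η * ‖∫ x, f x ∂μ‖ ≤ Real.cos η * ∫ x, ‖f x‖ ∂μ := by
        gcongr; exact norm_integral_le_integral_norm f
    _ ≤ (∫ x, f x ∂μ).re := cos_mul_integral_norm_le_re_integral_of_abs_arg_le hf hη0 hηπ h

end Complex

theorem stmt_0 (a b : ℝ) (hab : a < b) (g : ℝ → ℂ)
    (hg : IntegrableOn g (Icc a b))
    (θ₀ η : ℝ) (hη0 : 0 ≤ η) (hη : η < π / 2)
    (harg : ∀ y ∈ Icc a b, |Complex.arg (g y * Complex.exp (-θ₀ * Complex.I))| ≤ η) :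
    ∃ ρ φ : ℝ, (∫ y in a..b, g y) = ρ * Complex.exp ((θ₀ + φ) * Complex.I) ∧
      Real.cos η * (∫ y in a..b, ‖g y‖) ≤ ρ ∧ |φ| ≤ η := by
  set h : ℝ → ℂ := fun y => g y * Complex.exp (-θ₀ * Complex.I)
  set J : ℂ := ∫ y in Ioc a b, h y
  have hh : IntegrableOn h (Ioc a b) := (hg.mono_set Ioc_subset_Icc_self).mul_const _
  have hargJ : ∀ᵐ y ∂volume.restrict (Ioc a b), |(h y).arg| ≤ η :=
    ae_restrict_of_forall_mem measurableSet_Ioc fun y hy => harg y (Ioc_subset_Icc_self hy)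
  have hnorm : ∀ y, ‖h y‖ = ‖g y‖ := fun y => by
    simp [h, ← Complex.ofReal_neg, Complex.norm_exp_ofReal_mul_I]
  have hgJ : (∫ y in a..b, g y) = J * Complex.exp (θ₀ * Complex.I) := by
    rw [intervalIntegral.integral_of_le hab.le, ← integral_mul_const]
    refine integral_congr_ae (ae_of_all _ fun y => ?_)
    simp only [h, mul_assoc, ← Complex.exp_add, neg_mul, neg_add_cancel, Complex.exp_zero, mul_one]
  refine ⟨‖J‖, J.arg, ?_, ?_, Complex.abs_arg_integral_le hh hη0 hη.le hargJ⟩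
  · rw [hgJ, add_mul, Complex.exp_add, ← mul_assoc, mul_right_comm,
      Complex.norm_mul_exp_arg_mul_I, mul_comm]
  · calc Real.cos η * (∫ y in a..b, ‖g y‖) = Real.cos η * ∫ y in Ioc a b, ‖h y‖ := by
          simp only [hnorm, intervalIntegral.integral_of_le hab.le]
      _ ≤ J.re := Complex.cos_mul_integral_norm_le_re_integral_of_abs_arg_le hh hη0
          (hη.le.trans (by linarith [pi_pos])) hargJ
      _ ≤ ‖J‖ := Complex.re_le_norm J
end

section
/- Let τ ≥ 3, let δ = (log log τ + a)/log τ with a ≥ log 6, and let ν ∈ [2,3]. Define Π(x) = ∫₁^x (1 - 1/u)/log u du + R(x), where R(x) = sin(τ log x) for τ^{1+δ} < x ≤ τ^{ν} and R(x) = 0 otherwise. Then Π is non-decreasing on (1, ∞). -/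
/-! On `(1, ∞)` the main term `∫₁^x (1 - 1/u)/log u du` is increasing with derivative
`(1 - 1/x)/log x`, which on `[τ^{1+δ}, τ^ν]` is at least `2/(9 log τ)`. The choice of `δ` gives
`τ^{1+δ} = e^a τ log τ ≥ 6 τ log τ`, so there the derivative `τ cos(τ log x)/x` of the
oscillating term is at most `1/(6 log τ)` in absolute value, and the sum is still increasing.
The integrality conditions make `sin(τ log x)` vanish at both endpoints, so `Π` has no jumps. -/

open Real Set MeasureTheory

theorem MonotoneOn.ite_Ioc {α β : Type*} [LinearOrder α] [Preorder β] {f g : α → β}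
    {s : Set α} {a b : α} (hs : s.OrdConnected) (hf : MonotoneOn f s)
    (hg : MonotoneOn g (Icc a b)) (ha : g a = f a) (hb : g b = f b) :
    MonotoneOn (fun x => if a < x ∧ x ≤ b then g x else f x) s := by
  intro x hx y hy hxy
  by_cases hx' : a < x ∧ x ≤ b <;> by_cases hy' : a < y ∧ y ≤ b <;>
    simp only [hx', hy', if_false]
  · exact hg ⟨hx'.1.le, hx'.2⟩ ⟨hy'.1.le, hy'.2⟩ hxy
  · have hby : b < y := by
      by_contra! h
      exact hy' ⟨hx'.1.trans_le hxy, h⟩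
    calc g x ≤ g b := hg ⟨hx'.1.le, hx'.2⟩ ⟨hx'.1.le.trans hx'.2, le_rfl⟩ hx'.2
      _ = f b := hb
      _ ≤ f y := hf (hs.out hx hy ⟨hx'.2, hby.le⟩) hy hby.le
  · have hxa : x ≤ a := by
      by_contra! h
      exact hx' ⟨h, hxy.trans hy'.2⟩
    calc f x ≤ f a := hf hx (hs.out hx hy ⟨hxa, hy'.1.le⟩) hxa
      _ = g a := ha.symm
      _ ≤ g y := hg ⟨le_rfl, hy'.1.le.trans hy'.2⟩ ⟨hy'.1.le, hy'.2⟩ hy'.1.le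
  · exact hf hx hy hxy

theorem one_sub_inv_div_log_nonneg {u : ℝ} (hu : 1 ≤ u) : 0 ≤ (1 - 1 / u) / log u :=
  div_nonneg (sub_nonneg.2 (div_le_one_of_le₀ hu (by linarith))) (log_nonneg hu)

theorem one_sub_inv_div_log_le_one {u : ℝ} (hu : 1 ≤ u) : (1 - 1 / u) / log u ≤ 1 := by
  rcases hu.eq_or_lt with rfl | hu
  · simp
  rw [div_le_one (log_pos hu), one_div]
  exact one_sub_inv_le_log_of_pos (by linarith)

theorem measurable_one_sub_inv_div_log : Measurable fun u : ℝ => (1 - 1 / u) / log u := by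
  fun_prop

/- The integrand takes the junk value `0 / 0 = 0` at `u = 1`, where its limit is `1`, so it is not
continuous on `[1, ∞)`; integrability comes from boundedness instead. -/
theorem intervalIntegrable_one_sub_inv_div_log {x y : ℝ} (hx : 1 ≤ x) (hy : 1 ≤ y) :
    IntervalIntegrable (fun u => (1 - 1 / u) / log u) volume x y := by
  rw [intervalIntegrable_iff]
  refine Measure.integrableOn_of_bounded (M := 1) measure_Ioc_lt_top.ne
    measurable_one_sub_inv_div_log.aestronglyMeasurable ?_
  refine ae_restrict_of_forall_mem measurableSet_uIoc fun u hu => ?_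
  have hu1 : 1 ≤ u := (le_min hx hy).trans hu.1.le
  rw [norm_of_nonneg (one_sub_inv_div_log_nonneg hu1)]
  exact one_sub_inv_div_log_le_one hu1

theorem hasDerivAt_integral_one_sub_inv_div_log {x : ℝ} (hx : 1 < x) :
    HasDerivAt (fun x => ∫ u in (1 : ℝ)..x, (1 - 1 / u) / log u) ((1 - 1 / x) / log x) x := by
  have hx0 : x ≠ 0 := by positivity
  refine intervalIntegral.integral_hasDerivAt_right
    (intervalIntegrable_one_sub_inv_div_log le_rfl hx.le)
    measurable_one_sub_inv_div_log.stronglyMeasurable.stronglyMeasurableAtFilter ?_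
  exact (continuousAt_const.sub (continuousAt_const.div continuousAt_id hx0)).div
    (continuousAt_log hx0) (log_pos hx).ne'

theorem monotoneOn_integral_one_sub_inv_div_log :
    MonotoneOn (fun x => ∫ u in (1 : ℝ)..x, (1 - 1 / u) / log u) (Ici 1) := by
  intro x hx y hy hxy
  refine intervalIntegral.integral_mono_interval le_rfl hx hxy ?_
    (intervalIntegrable_one_sub_inv_div_log le_rfl hy)
  exact ae_restrict_of_forall_mem measurableSet_Ioc fun u hu =>
    one_sub_inv_div_log_nonneg hu.1.le

theorem monotoneOn_integral_one_sub_inv_div_log_add_sin {τ A B : ℝ} (hτ : 0 ≤ τ) (hA : 1 < A)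
    (hdom : ∀ x ∈ Icc A B, τ / x ≤ (1 - 1 / x) / log x) :
    MonotoneOn (fun x => (∫ u in (1 : ℝ)..x, (1 - 1 / u) / log u) + sin (τ * log x))
      (Icc A B) := by
  have hderiv : ∀ x, A ≤ x → HasDerivAt
      (fun x => (∫ u in (1 : ℝ)..x, (1 - 1 / u) / log u) + sin (τ * log x))
      ((1 - 1 / x) / log x + cos (τ * log x) * (τ * x⁻¹)) x := fun x hx =>
    (hasDerivAt_integral_one_sub_inv_div_log (hA.trans_le hx)).add
      (((hasDerivAt_log (by linarith)).const_mul τ).sin)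
  refine monotoneOn_of_deriv_nonneg (convex_Icc A B)
    (fun x hx => (hderiv x hx.1).continuousAt.continuousWithinAt)
    (fun x hx => (hderiv x (interior_subset hx).1).differentiableAt.differentiableWithinAt)
    fun x hx => ?_
  rw [interior_Icc] at hx
  rw [(hderiv x hx.1.le).deriv]
  have hcos : -(τ / x) ≤ cos (τ * log x) * (τ * x⁻¹) := by
    have : 0 ≤ τ / x := div_nonneg hτ (by linarith [hx.1])
    rw [← div_eq_mul_inv]
    nlinarith [neg_one_le_cos (τ * log x)]
  linarith [hdom x (Ioo_subset_Icc_self hx)]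

theorem div_le_one_sub_inv_div_log {τ x : ℝ} (hτ : 0 < τ) (hx : 3 ≤ x)
    (hτx : 6 * τ * log τ ≤ x) (hlog : log x ≤ 3 * log τ) : τ / x ≤ (1 - 1 / x) / log x := by
  have hlogx : 0 < log x := log_pos (by linarith)
  have hlogτ : 0 < log τ := by linarith
  have hx23 : 2 / 3 ≤ 1 - 1 / x := by
    have : 1 / x ≤ 1 / 3 := one_div_le_one_div_of_le (by norm_num) hx
    linarith
  calc τ / x ≤ τ / (6 * τ * log τ) := by gcongr
    _ = 1 / (6 * log τ) := by field_simp
    _ ≤ (2 / 3) / (3 * log τ) := by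
        rw [div_le_div_iff₀ (by positivity) (by positivity)]
        linarith
    _ ≤ (2 / 3) / log x := by gcongr
    _ ≤ (1 - 1 / x) / log x := by gcongr

theorem rpow_one_add_log_log_add_div_log {τ : ℝ} (hτ : 1 < τ) (a : ℝ) :
    τ ^ (1 + (log (log τ) + a) / log τ) = τ * log τ * exp a := by
  have hlogτ : 0 < log τ := log_pos hτ
  rw [rpow_def_of_pos (by linarith), mul_add, mul_one, mul_div_cancel₀ _ hlogτ.ne', ← add_assoc,
    exp_add, exp_add, exp_log (by linarith), exp_log hlogτ]

theorem sin_mul_log_rpow_eq_zero {τ s : ℝ} (hτ : 0 < τ)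
    (h : ∃ n : ℤ, s * τ * log τ = 2 * π * n) : sin (τ * log (τ ^ s)) = 0 := by
  obtain ⟨n, hn⟩ := h
  rw [log_rpow hτ, show τ * (s * log τ) = ((2 * n : ℤ) : ℝ) * π by push_cast; linarith]
  exact sin_int_mul_pi _

theorem stmt_3_general (τ a δ ν : ℝ) (hτ : 3 ≤ τ) (ha : Real.log 6 ≤ a)
    (hδ : δ = (Real.log (Real.log τ) + a) / Real.log τ)
    (hν2 : ν ≤ 3)
    (hint1 : ∃ n : ℤ, (1 + δ) * τ * Real.log τ = 2 * π * n)
    (hint2 : ∃ n : ℤ, ν * τ * Real.log τ = 2 * π * n)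
    (R : ℝ → ℝ)
    (hR : ∀ x, R x = if τ ^ (1 + δ) < x ∧ x ≤ τ ^ ν then Real.sin (τ * Real.log x) else 0)
    (Pi : ℝ → ℝ)
    (hPi : ∀ x, Pi x = (∫ u in (1:ℝ)..x, (1 - 1 / u) / Real.log u) + R x) :
    MonotoneOn Pi (Set.Ioi 1) := by
  have hτ0 : 0 < τ := by linarith
  have hlogτ : 2 / 3 ≤ log τ := by
    have := one_sub_inv_le_log_of_pos hτ0
    have : τ⁻¹ ≤ 3⁻¹ := inv_anti₀ (by norm_num) hτ
    linarith
  have hA : 6 * τ * log τ ≤ τ ^ (1 + δ) := by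
    have h6 : 6 ≤ exp a := by simpa [exp_log] using exp_le_exp.2 ha
    rw [hδ, rpow_one_add_log_log_add_div_log (by linarith)]
    nlinarith [mul_pos hτ0 (by linarith : 0 < log τ)]
  have hPi' : Pi = fun x => if τ ^ (1 + δ) < x ∧ x ≤ τ ^ ν then
      (∫ u in (1 : ℝ)..x, (1 - 1 / u) / log u) + sin (τ * log x)
      else ∫ u in (1 : ℝ)..x, (1 - 1 / u) / log u := by
    funext x
    rw [hPi, hR]
    split_ifs <;> simp
  rw [hPi']
  refine (monotoneOn_integral_one_sub_inv_div_log.mono Ioi_subset_Ici_self).ite_Ioc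
    ordConnected_Ioi ?_ ?_ ?_
  · have h3A : 3 ≤ τ ^ (1 + δ) := by nlinarith
    refine monotoneOn_integral_one_sub_inv_div_log_add_sin hτ0.le (by linarith)
      fun x hx => div_le_one_sub_inv_div_log hτ0 (h3A.trans hx.1) (hA.trans hx.1) ?_
    calc log x ≤ log (τ ^ ν) := log_le_log (by linarith [hx.1]) hx.2
      _ = ν * log τ := log_rpow hτ0 ν
      _ ≤ 3 * log τ := by gcongr
  · rw [sin_mul_log_rpow_eq_zero hτ0 hint1, add_zero]
  · rw [sin_mul_log_rpow_eq_zero hτ0 hint2, add_zero]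

theorem stmt_3 (τ a δ ν : ℝ) (hτ : 3 ≤ τ) (ha : Real.log 6 ≤ a)
    (hδ : δ = (Real.log (Real.log τ) + a) / Real.log τ)
    (hν1 : 2 ≤ ν) (hν2 : ν ≤ 3)
    (hint1 : ∃ n : ℤ, (1 + δ) * τ * Real.log τ = 2 * π * n)
    (hint2 : ∃ n : ℤ, ν * τ * Real.log τ = 2 * π * n)
    (R : ℝ → ℝ)
    (hR : ∀ x, R x = if τ ^ (1 + δ) < x ∧ x ≤ τ ^ ν then Real.sin (τ * Real.log x) else 0)
    (Pi : ℝ → ℝ)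
    (hPi : ∀ x, Pi x = (∫ u in (1:ℝ)..x, (1 - 1 / u) / Real.log u) + R x) :
    MonotoneOn Pi (Set.Ioi 1) :=
  stmt_3_general τ a δ ν hτ ha hδ hν2 hint1 hint2 R hR Pi hPi
end

section
/- Let X₁, …, X_J be independent Bernoulli random variables where X_j has success probability q_j ∈ [0,1], let r₁, …, r_J be real numbers with |r_j| ≤ 1, and set X = Σ_{j=1}^J r_j X_j. If 0 ≤ v ≤ 2·Σ_{j=1}^J q_j(1 - q_j), then P(X ≥ E[X] + v) ≤ exp(−v² / (4·Σ_{j=1}^J q_j(1−q_j))). -/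
/-!
Chernoff's method with a variance-sensitive bound on each factor of the moment generating
function. For a Bernoulli variable of mean `q` and `|s| ≤ 1`, centering at the mean and using
`exp x ≤ 1 + x + x²` on `[-1, 1]` gives
`E[exp (s (X - q))] ≤ 1 + q (1 - q) s² ≤ exp (q (1 - q) s²)`.
Multiplying over the independent summands `r_j X_j` at a parameter `0 ≤ t ≤ 1` bounds the tail by
`exp (-t v + t² σ²)` with `σ² = ∑ q_j (1 - q_j)`, and the optimal choice `t = v / (2σ²)` is
admissible exactly because `v ≤ 2σ²`.
-/

open MeasureTheory ProbabilityTheory Real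

namespace Real

lemma exp_le_one_add_add_sq {x : ℝ} (hx : |x| ≤ 1) : exp x ≤ 1 + x + x ^ 2 := by
  linarith [(abs_le.1 (abs_exp_sub_one_sub_id_le hx)).2]

lemma one_sub_add_mul_exp_le {q s : ℝ} (hq0 : 0 ≤ q) (hq1 : q ≤ 1) (hs : |s| ≤ 1) :
    1 - q + q * exp s ≤ exp (q * s + q * (1 - q) * s ^ 2) := by
  have h₁ : |s * (1 - q)| ≤ 1 := by
    rw [abs_mul, abs_of_nonneg (sub_nonneg.2 hq1)]
    nlinarith [abs_nonneg s]
  have h₂ : |-(s * q)| ≤ 1 := by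
    rw [abs_neg, abs_mul, abs_of_nonneg hq0]
    nlinarith [abs_nonneg s]
  have hcentered : q * exp (s * (1 - q)) + (1 - q) * exp (-(s * q)) ≤
      exp (q * (1 - q) * s ^ 2) := by
    have : 0 ≤ 1 - q := sub_nonneg.2 hq1
    calc q * exp (s * (1 - q)) + (1 - q) * exp (-(s * q))
        ≤ q * (1 + s * (1 - q) + (s * (1 - q)) ^ 2)
            + (1 - q) * (1 + -(s * q) + (-(s * q)) ^ 2) := by
          gcongr
          exacts [exp_le_one_add_add_sq h₁, exp_le_one_add_add_sq h₂]
      _ = q * (1 - q) * s ^ 2 + 1 := by ring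
      _ ≤ exp (q * (1 - q) * s ^ 2) := add_one_le_exp _
  have e₁ : exp (q * s) * exp (s * (1 - q)) = exp s := by rw [← exp_add]; ring_nf
  have e₂ : exp (q * s) * exp (-(s * q)) = 1 := by rw [← exp_add, ← exp_zero]; ring_nf
  calc 1 - q + q * exp s
      = exp (q * s) * (q * exp (s * (1 - q)) + (1 - q) * exp (-(s * q))) := by
        linear_combination -q * e₁ - (1 - q) * e₂
    _ ≤ exp (q * s) * exp (q * (1 - q) * s ^ 2) := by gcongr
    _ = exp (q * s + q * (1 - q) * s ^ 2) := (exp_add _ _).symm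

end Real

section ZeroOne

variable {Ω : Type*} {X : Ω → ℝ}

lemma eq_indicator_of_zero_or_one (hX : ∀ ω, X ω = 0 ∨ X ω = 1) :
    X = {ω | X ω = 1}.indicator 1 := by
  funext ω
  rcases hX ω with h | h <;> simp [h]

lemma exp_mul_of_zero_or_one (hX : ∀ ω, X ω = 0 ∨ X ω = 1) (t : ℝ) :
    (fun ω ↦ exp (t * X ω)) = fun ω ↦ 1 + (exp t - 1) * X ω := by
  funext ω
  rcases hX ω with h | h <;> simp [h]

variable [MeasurableSpace Ω] {μ : Measure Ω}

lemma integrable_of_zero_or_one [IsFiniteMeasure μ] (hmeas : Measurable X)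
    (hX : ∀ ω, X ω = 0 ∨ X ω = 1) : Integrable X μ := by
  rw [eq_indicator_of_zero_or_one hX]
  exact (integrable_const 1).indicator (hmeas (measurableSet_singleton 1))

lemma integral_of_zero_or_one (hmeas : Measurable X) (hX : ∀ ω, X ω = 0 ∨ X ω = 1) :
    ∫ ω, X ω ∂μ = μ.real {ω | X ω = 1} := by
  have hS : MeasurableSet {ω | X ω = 1} := hmeas (measurableSet_singleton 1)
  conv_lhs => rw [eq_indicator_of_zero_or_one hX]
  rw [Pi.one_def, integral_indicator_const _ hS, smul_eq_mul, mul_one]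

lemma integrable_exp_mul_of_zero_or_one [IsFiniteMeasure μ] (hmeas : Measurable X)
    (hX : ∀ ω, X ω = 0 ∨ X ω = 1) (t : ℝ) : Integrable (fun ω ↦ exp (t * X ω)) μ := by
  rw [exp_mul_of_zero_or_one hX]
  exact (integrable_const 1).add ((integrable_of_zero_or_one hmeas hX).const_mul _)

lemma mgf_of_zero_or_one [IsProbabilityMeasure μ] (hmeas : Measurable X)
    (hX : ∀ ω, X ω = 0 ∨ X ω = 1) (t : ℝ) :
    mgf X μ t = 1 - μ.real {ω | X ω = 1} + μ.real {ω | X ω = 1} * exp t := by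
  have hint := integrable_of_zero_or_one (μ := μ) hmeas hX
  rw [mgf, exp_mul_of_zero_or_one hX, integral_add (integrable_const 1) (hint.const_mul _),
    integral_const_mul, integral_of_zero_or_one hmeas hX]
  simp only [integral_const, probReal_univ, smul_eq_mul, mul_one]
  ring

lemma mgf_const_mul_le_of_zero_or_one [IsProbabilityMeasure μ] (hmeas : Measurable X)
    (hX : ∀ ω, X ω = 0 ∨ X ω = 1) {r t : ℝ} (hr : |r| ≤ 1) (ht : |t| ≤ 1) :
    mgf (fun ω ↦ r * X ω) μ t ≤
      exp (t * (r * μ.real {ω | X ω = 1}) +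
        t ^ 2 * (μ.real {ω | X ω = 1} * (1 - μ.real {ω | X ω = 1}))) := by
  set p := μ.real {ω | X ω = 1}
  have hp0 : 0 ≤ p := measureReal_nonneg
  have hp1 : p ≤ 1 := measureReal_le_one
  have hrt : |r * t| ≤ 1 := by
    rw [abs_mul]
    nlinarith [abs_nonneg r, abs_nonneg t]
  have hr2 : r ^ 2 ≤ 1 := by nlinarith [sq_abs r, abs_nonneg r]
  rw [mgf_const_mul, mgf_of_zero_or_one hmeas hX]
  refine (one_sub_add_mul_exp_le hp0 hp1 hrt).trans (exp_le_exp.2 ?_)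
  have : 0 ≤ p * (1 - p) * t ^ 2 := by have := sub_nonneg.2 hp1; positivity
  nlinarith

end ZeroOne

namespace ProbabilityTheory

lemma iIndepFun.measureReal_sum_ge_le {Ω ι : Type*} [MeasurableSpace Ω] {μ : Measure Ω}
    [Fintype ι] {Y : ι → Ω → ℝ} (hindep : iIndepFun Y μ) (hmeas : ∀ i, Measurable (Y i))
    {t : ℝ} (ht : 0 ≤ t) (hint : ∀ i, Integrable (fun ω ↦ exp (t * Y i ω)) μ)
    {m c : ι → ℝ} (hmgf : ∀ i, mgf (Y i) μ t ≤ exp (t * m i + t ^ 2 * c i)) (v : ℝ) :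
    μ.real {ω | ∑ i, m i + v ≤ ∑ i, Y i ω} ≤ exp (-t * v + t ^ 2 * ∑ i, c i) := by
  have := hindep.isProbabilityMeasure
  have hchernoff := measure_ge_le_exp_mul_mgf (X := ∑ i, Y i) (∑ i, m i + v) ht
    (hindep.integrable_exp_mul_sum (s := Finset.univ) hmeas fun i _ ↦ hint i)
  simp only [Finset.sum_apply] at hchernoff
  calc μ.real {ω | ∑ i, m i + v ≤ ∑ i, Y i ω}
      ≤ exp (-t * (∑ i, m i + v)) * ∏ i, mgf (Y i) μ t := by
        rwa [← hindep.mgf_sum hmeas]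
    _ ≤ exp (-t * (∑ i, m i + v)) * ∏ i, exp (t * m i + t ^ 2 * c i) := by
        gcongr with i
        exacts [fun i _ ↦ mgf_nonneg, hmgf i]
    _ = exp (-t * v + t ^ 2 * ∑ i, c i) := by
        rw [← exp_sum, ← exp_add, Finset.sum_add_distrib, ← Finset.mul_sum, ← Finset.mul_sum]
        ring_nf

end ProbabilityTheory

-- Also true for `s = 0`, where both sides vanish since `x / 0 = 0`: this covers `σ² = 0`.
lemma neg_div_mul_add_div_sq_mul (v s : ℝ) :
    -(v / (2 * s)) * v + (v / (2 * s)) ^ 2 * s = -v ^ 2 / (4 * s) := by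
  rcases eq_or_ne s 0 with rfl | hs
  · simp
  · field_simp
    ring

theorem stmt_5_general {Ω : Type*} [MeasurableSpace Ω] (μ : Measure Ω) [IsProbabilityMeasure μ]
    (J : ℕ) (X : Fin J → Ω → ℝ) (q r : Fin J → ℝ)
    (hq0 : ∀ j, 0 ≤ q j)
    (hmeas : ∀ j, Measurable (X j))
    (hindep : iIndepFun X μ)
    (hbern : ∀ j, ∀ ω, X j ω = 0 ∨ X j ω = 1)
    (hlaw : ∀ j, μ {ω | X j ω = 1} = ENNReal.ofReal (q j))
    (hr : ∀ j, |r j| ≤ 1)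
    (v : ℝ) (hv0 : 0 ≤ v) (hv : v ≤ 2 * ∑ j, q j * (1 - q j)) :
    μ {ω | (μ[fun ω' => ∑ j, r j * X j ω']) + v ≤ ∑ j, r j * X j ω}
      ≤ ENNReal.ofReal (Real.exp (-v ^ 2 / (4 * ∑ j, q j * (1 - q j)))) := by
  have hp : ∀ j, μ.real {ω | X j ω = 1} = q j := fun j ↦ by
    rw [measureReal_def, hlaw, ENNReal.toReal_ofReal (hq0 j)]
  have hmean : μ[fun ω ↦ ∑ j, r j * X j ω] = ∑ j, r j * q j := by
    rw [integral_finsetSum _ fun j _ ↦ (integrable_of_zero_or_one (hmeas j) (hbern j)).const_mul _]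
    simp only [integral_const_mul, integral_of_zero_or_one (hmeas _) (hbern _), hp]
  set σ2 := ∑ j, q j * (1 - q j)
  set t := v / (2 * σ2)
  have ht0 : 0 ≤ t := div_nonneg hv0 (by linarith)
  have ht1 : |t| ≤ 1 := by rw [abs_of_nonneg ht0]; exact div_le_one_of_le₀ hv (by linarith)
  have hindep' : iIndepFun (fun j ω ↦ r j * X j ω) μ :=
    hindep.comp (fun j x ↦ r j * x) fun j ↦ measurable_id.const_mul (r j)
  have hchernoff := hindep'.measureReal_sum_ge_le (m := fun j ↦ r j * q j)
    (c := fun j ↦ q j * (1 - q j))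
    (fun j ↦ (hmeas j).const_mul (r j)) ht0
    (fun j ↦ by simpa only [mul_assoc] using
      integrable_exp_mul_of_zero_or_one (μ := μ) (hmeas j) (hbern j) (t * r j))
    (fun j ↦ by
      simpa only [hp] using mgf_const_mul_le_of_zero_or_one (μ := μ) (hmeas j) (hbern j) (hr j) ht1)
    v
  rw [show -t * v + t ^ 2 * σ2 = -v ^ 2 / (4 * σ2) from neg_div_mul_add_div_sq_mul v σ2]
    at hchernoff
  rw [hmean, ← ofReal_measureReal]
  exact ENNReal.ofReal_le_ofReal hchernoff

theorem stmt_5 {Ω : Type*} [MeasurableSpace Ω] (μ : Measure Ω) [IsProbabilityMeasure μ]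
    (J : ℕ) (X : Fin J → Ω → ℝ) (q r : Fin J → ℝ)
    (hq0 : ∀ j, 0 ≤ q j) (hq1 : ∀ j, q j ≤ 1)
    (hmeas : ∀ j, Measurable (X j))
    (hindep : iIndepFun X μ)
    (hbern : ∀ j, ∀ ω, X j ω = 0 ∨ X j ω = 1)
    (hlaw : ∀ j, μ {ω | X j ω = 1} = ENNReal.ofReal (q j))
    (hr : ∀ j, |r j| ≤ 1)
    (v : ℝ) (hv0 : 0 ≤ v) (hv : v ≤ 2 * ∑ j, q j * (1 - q j)) :
    μ {ω | (μ[fun ω' => ∑ j, r j * X j ω']) + v ≤ ∑ j, r j * X j ω}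
      ≤ ENNReal.ofReal (Real.exp (-v ^ 2 / (4 * ∑ j, q j * (1 - q j)))) :=
  stmt_5_general μ J X q r hq0 hmeas hindep hbern hlaw hr v hv0 hv
end

section
/- Let dP be the measure (1 - 1/u)/log u · du on (1, ∞). Then the multiplicative-convolution exponential of dP equals δ₁ + du, i.e. exp*(dP) = δ₁ + Lebesgue measure on (1,∞), where δ₁ is the Dirac measure at 1. Equivalently, for Re s > 1, exp(∫₁^∞ x^{-s}·(1 - 1/x)/log x dx) = s/(s - 1). -/
open MeasureTheory Set Real

/-!
Since `x ^ (-s) * (1 - 1 / x) = x ^ (-s) - x ^ (-(s + 1))` and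
`(x ^ (-a) - x ^ (-b)) / log x = ∫ t in a..b, x ^ (-t)`, Fubini turns the integral into
`∫ t in s..s+1, ∫ x in Ioi 1, x ^ (-t) = ∫ t in s..s+1, (t - 1)⁻¹ = log (s / (s - 1))`.
-/

theorem integral_const_rpow_neg {x : ℝ} (hx₀ : 0 < x) (hx₁ : x ≠ 1) (a b : ℝ) :
    ∫ t in a..b, x ^ (-t) = (x ^ (-a) - x ^ (-b)) / log x := by
  have hlog : log x ≠ 0 := log_ne_zero_of_pos_of_ne_one hx₀ hx₁
  have hderiv (t : ℝ) : HasDerivAt (fun t => -x ^ (-t) / log x) (x ^ (-t)) t :=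
    (((hasDerivAt_neg t).const_rpow hx₀).neg.div_const (log x)).congr_deriv (by field_simp)
  rw [intervalIntegral.integral_eq_sub_of_hasDerivAt (fun t _ => hderiv t)
    ((continuous_const.rpow continuous_neg fun _ => Or.inl hx₀.ne').intervalIntegrable _ _)]
  ring

theorem integral_Ioi_one_rpow_neg {t : ℝ} (ht : 1 < t) :
    ∫ x in Ioi (1 : ℝ), x ^ (-t) = (t - 1)⁻¹ := by
  rw [integral_Ioi_rpow_of_lt (by linarith) one_pos, one_rpow, neg_div, ← div_neg, one_div]
  ring_nf

theorem integrableOn_rpow_neg_Ioi_one_prod_Ioc {a : ℝ} (ha : 1 < a) (b : ℝ) :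
    IntegrableOn (fun p : ℝ × ℝ => p.1 ^ (-p.2)) (Ioi 1 ×ˢ Ioc a b) := by
  have hbound : IntegrableOn (fun p : ℝ × ℝ => p.1 ^ (-a) * 1) (Ioi 1 ×ˢ Ioc a b) := by
    rw [IntegrableOn, Measure.volume_eq_prod, ← Measure.prod_restrict]
    exact (integrableOn_Ioi_rpow_of_lt (by linarith) one_pos).mul_prod (integrable_const 1)
  refine hbound.mono' (measurable_fst.pow measurable_snd.neg).aestronglyMeasurable ?_
  filter_upwards [ae_restrict_mem (measurableSet_Ioi.prod measurableSet_Ioc)]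
    with ⟨x, t⟩ ⟨hx, ht⟩
  rw [mul_one, norm_of_nonneg (rpow_nonneg (zero_le_one.trans hx.out.le) _)]
  exact rpow_le_rpow_of_exponent_le hx.out.le (neg_le_neg ht.1.le)

theorem integral_Ioi_one_rpow_neg_sub_rpow_neg_div_log_of_le {a b : ℝ} (ha : 1 < a)
    (hab : a ≤ b) :
    ∫ x in Ioi (1 : ℝ), (x ^ (-a) - x ^ (-b)) / log x = log ((b - 1) / (a - 1)) := by
  have hint : Integrable (Function.uncurry fun x t : ℝ => x ^ (-t))
      ((volume.restrict (Ioi 1)).prod (volume.restrict (Ioc a b))) := by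
    rw [Measure.prod_restrict, ← Measure.volume_eq_prod]
    exact integrableOn_rpow_neg_Ioi_one_prod_Ioc ha b
  calc ∫ x in Ioi (1 : ℝ), (x ^ (-a) - x ^ (-b)) / log x
      = ∫ x in Ioi (1 : ℝ), ∫ t in Ioc a b, x ^ (-t) :=
        setIntegral_congr_fun measurableSet_Ioi fun x (hx : 1 < x) => by
          rw [← intervalIntegral.integral_of_le hab,
            integral_const_rpow_neg (zero_lt_one.trans hx) hx.ne']
    _ = ∫ t in Ioc a b, ∫ x in Ioi (1 : ℝ), x ^ (-t) := integral_integral_swap hint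
    _ = ∫ t in Ioc a b, (t - 1)⁻¹ :=
        setIntegral_congr_fun measurableSet_Ioc fun t ht =>
          integral_Ioi_one_rpow_neg (ha.trans ht.1)
    _ = log ((b - 1) / (a - 1)) := by
      rw [← intervalIntegral.integral_of_le hab,
        intervalIntegral.integral_comp_sub_right (fun u => u⁻¹),
        integral_inv_of_pos (by linarith) (by linarith)]

theorem integral_Ioi_one_rpow_neg_sub_rpow_neg_div_log {a b : ℝ} (ha : 1 < a) (hb : 1 < b) :
    ∫ x in Ioi (1 : ℝ), (x ^ (-a) - x ^ (-b)) / log x = log ((b - 1) / (a - 1)) := by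
  rcases le_total a b with hab | hba
  · exact integral_Ioi_one_rpow_neg_sub_rpow_neg_div_log_of_le ha hab
  · rw [← inv_div, log_inv, ← integral_Ioi_one_rpow_neg_sub_rpow_neg_div_log_of_le hb hba,
      ← integral_neg]
    simp only [← neg_div, neg_sub]

theorem stmt_7 (s : ℝ) (hs : 1 < s) :
    Real.exp (∫ x in Set.Ioi (1:ℝ), x ^ (-s) * (1 - 1 / x) / Real.log x) = s / (s - 1) := by
  have hintegrand : ∀ x ∈ Ioi (1 : ℝ),
      x ^ (-s) * (1 - 1 / x) / log x = (x ^ (-s) - x ^ (-(s + 1))) / log x := fun x hx => by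
    rw [neg_add, rpow_add (zero_lt_one.trans hx), rpow_neg_one, mul_one_sub, one_div]
  rw [setIntegral_congr_fun measurableSet_Ioi hintegrand,
    integral_Ioi_one_rpow_neg_sub_rpow_neg_div_log hs (by linarith), add_sub_cancel_right,
    exp_log (div_pos (by linarith) (by linarith))]
end

section
/- Let a₁ = log(80/π) and suppose (τ_k)_{k≥0} satisfies τ₀ ≥ 3 and τ_{k+1} > (2τ_k)^5. Let (β_k)_{k≥0} be any sequence of reals. Then there exists a sequence (ε_k)_{k≥0} with 0 ≤ ε_k < 2π/τ_k such that, setting ε = Σ_{k≥0} ε_k, for every k one has τ_k(log(80/π) + ε) ∈ β_k + 2πℤ + O(τ_k^{−4}), i.e. the distance from τ_k(log(80/π)+ε) to β_k + 2πℤ is O(τ_k^{−4}). -/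
/-! The ε_k are chosen greedily: once ε₀, …, ε_{k-1} are fixed, ε_k ∈ [0, 2π/τ_k) is the unique
shift making τ_k (a + ε₀ + ⋯ + ε_k) land exactly in β_k + 2πℤ. The error at step k then comes
only from the tail Σ_{j>k} ε_j. Since τ at least doubles at each step, that tail is at most twice
its largest possible first term, 4π/τ_{k+1}, and τ_k · 4π/τ_{k+1} < π τ_k^{-4} by the growth
condition. -/

open Real Finset

section Doubling

variable {τ : ℕ → ℝ}

lemma one_le_of_pow_five_lt (h0 : 1 ≤ τ 0) (hgrow : ∀ k, (2 * τ k) ^ 5 < τ (k + 1)) (k : ℕ) :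
    1 ≤ τ k := by
  induction k with
  | zero => exact h0
  | succ k ih =>
    have : (1 : ℝ) ≤ (2 * τ k) ^ 5 := one_le_pow₀ (by linarith)
    linarith [hgrow k]

lemma two_mul_le_of_pow_five_lt (h0 : 1 ≤ τ 0) (hgrow : ∀ k, (2 * τ k) ^ 5 < τ (k + 1))
    (k : ℕ) : 2 * τ k ≤ τ (k + 1) := by
  have : 2 * τ k ≤ (2 * τ k) ^ 5 :=
    le_self_pow₀ (by linarith [one_le_of_pow_five_lt h0 hgrow k]) (by norm_num)
  linarith [hgrow k]

lemma mul_two_pow_le (hdouble : ∀ k, 2 * τ k ≤ τ (k + 1)) (k n : ℕ) :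
    τ k * 2 ^ n ≤ τ (k + n) := by
  induction n with
  | zero => simp
  | succ n ih =>
    calc τ k * 2 ^ (n + 1) = 2 * (τ k * 2 ^ n) := by ring
      _ ≤ 2 * τ (k + n) := by linarith
      _ ≤ τ (k + n + 1) := hdouble (k + n)

variable {e : ℕ → ℝ} {c : ℝ}

lemma le_geometric_of_le_div (hτ : ∀ k, 0 < τ k) (hdouble : ∀ k, 2 * τ k ≤ τ (k + 1))
    (hc : 0 ≤ c) (he : ∀ k, e k ≤ c / τ k) (m n : ℕ) :
    e (m + n) ≤ c / τ m * (1 / 2) ^ n := by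
  calc e (m + n) ≤ c / τ (m + n) := he _
    _ ≤ c / (τ m * 2 ^ n) :=
        div_le_div_of_nonneg_left hc (by have := hτ m; positivity) (mul_two_pow_le hdouble m n)
    _ = c / τ m * (1 / 2) ^ n := by rw [div_pow, one_pow, div_mul_div_comm, mul_one]

lemma summable_of_le_div (hτ : ∀ k, 0 < τ k) (hdouble : ∀ k, 2 * τ k ≤ τ (k + 1))
    (hc : 0 ≤ c) (he0 : ∀ k, 0 ≤ e k) (he : ∀ k, e k ≤ c / τ k) : Summable e :=
  Summable.of_nonneg_of_le he0
    (fun n => by simpa using le_geometric_of_le_div hτ hdouble hc he 0 n)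
    (summable_geometric_two.mul_left _)

lemma tsum_nat_add_le_of_le_div (hτ : ∀ k, 0 < τ k) (hdouble : ∀ k, 2 * τ k ≤ τ (k + 1))
    (hc : 0 ≤ c) (he0 : ∀ k, 0 ≤ e k) (he : ∀ k, e k ≤ c / τ k) (m : ℕ) :
    ∑' n, e (n + m) ≤ 2 * c / τ m := by
  have hsum := summable_of_le_div hτ hdouble hc he0 he
  calc ∑' n, e (n + m) ≤ ∑' n : ℕ, c / τ m * (1 / 2) ^ n :=
        Summable.tsum_le_tsum
          (fun n => by simpa [add_comm] using le_geometric_of_le_div hτ hdouble hc he m n)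
          ((summable_nat_add_iff m).2 hsum) (summable_geometric_two.mul_left _)
    _ = 2 * c / τ m := by rw [tsum_mul_left, tsum_geometric_two]; ring

end Doubling

section GreedyPhase

variable (τ β : ℕ → ℝ) (a : ℝ)

noncomputable def phaseStep (k : ℕ) (s : ℝ) : ℝ :=
  toIcoMod two_pi_pos 0 (β k - τ k * s) / τ k

noncomputable def phasePartialSum : ℕ → ℝ
  | 0 => a
  | k + 1 => phasePartialSum k + phaseStep τ β k (phasePartialSum k)

noncomputable def phaseIncrement (k : ℕ) : ℝ :=
  phaseStep τ β k (phasePartialSum τ β a k)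

variable {τ β}

lemma phaseStep_nonneg {k : ℕ} (hτ : 0 < τ k) (s : ℝ) : 0 ≤ phaseStep τ β k s :=
  div_nonneg (toIcoMod_mem_Ico' _ _).1 hτ.le

lemma phaseStep_lt {k : ℕ} (hτ : 0 < τ k) (s : ℝ) : phaseStep τ β k s < 2 * π / τ k :=
  div_lt_div_of_pos_right (toIcoMod_mem_Ico' _ _).2 hτ

lemma phasePartialSum_eq (k : ℕ) :
    phasePartialSum τ β a k = a + ∑ j ∈ range k, phaseIncrement τ β a j := by
  induction k with
  | zero => simp [phasePartialSum]
  | succ k ih => rw [sum_range_succ, ← add_assoc, ← ih]; rfl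

lemma mul_phasePartialSum_succ {k : ℕ} (hτ : τ k ≠ 0) :
    τ k * phasePartialSum τ β a (k + 1) =
      β k - 2 * π * toIcoDiv two_pi_pos 0 (β k - τ k * phasePartialSum τ β a k) := by
  have h := self_sub_toIcoMod_eq_mul two_pi_pos 0 (β k - τ k * phasePartialSum τ β a k)
  rw [phasePartialSum, phaseStep, mul_add, mul_div_cancel₀ _ hτ]
  linarith

lemma exists_int_sub_eq_mul_tsum_nat_add (hτ : ∀ k, τ k ≠ 0)
    (hsum : Summable (phaseIncrement τ β a)) (k : ℕ) :
    ∃ n : ℤ, τ k * (a + ∑' j, phaseIncrement τ β a j) - β k - 2 * π * n =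
      τ k * ∑' j, phaseIncrement τ β a (j + (k + 1)) := by
  refine ⟨-toIcoDiv two_pi_pos 0 (β k - τ k * phasePartialSum τ β a k), ?_⟩
  have hexact := mul_phasePartialSum_succ (β := β) a (hτ k)
  rw [phasePartialSum_eq] at hexact
  rw [← hsum.sum_add_tsum_nat_add (k + 1)]
  push_cast
  linear_combination hexact

end GreedyPhase

lemma mul_div_le_mul_rpow_neg_four {t s c : ℝ} (ht : 0 < t) (hc : 0 ≤ c)
    (hgrow : (2 * t) ^ 5 < s) : t * (4 * c / s) ≤ c * t ^ (-4 : ℝ) := by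
  have ht4 : 0 < t ^ 4 := by positivity
  have hs : 0 < s := lt_trans (by positivity) hgrow
  rw [Real.rpow_neg ht.le, show (4 : ℝ) = (4 : ℕ) by norm_num, Real.rpow_natCast,
    ← div_eq_mul_inv, mul_div_assoc', div_le_div_iff₀ hs ht4]
  push_cast
  nlinarith [mul_le_mul_of_nonneg_left hgrow.le hc, mul_nonneg hc (pow_pos ht 5).le]

theorem stmt_16 (τ : ℕ → ℝ) (h0 : 3 ≤ τ 0)
    (hgrow : ∀ k, (2 * τ k) ^ 5 < τ (k + 1))
    (β : ℕ → ℝ) :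
    ∃ ε : ℕ → ℝ, Summable ε ∧
      (∀ k, 0 ≤ ε k ∧ ε k < 2 * π / τ k) ∧
      ∃ C : ℝ, ∀ k, ∃ n : ℤ,
        |τ k * (Real.log (80 / π) + ∑' j, ε j) - β k - 2 * π * n| ≤ C * (τ k) ^ (-4 : ℝ) := by
  have h1 : 1 ≤ τ 0 := by linarith
  have hτ : ∀ k, 0 < τ k := fun k => by linarith [one_le_of_pow_five_lt h1 hgrow k]
  have hdouble := two_mul_le_of_pow_five_lt h1 hgrow
  set ε := phaseIncrement τ β (Real.log (80 / π))
  have hε0 : ∀ k, 0 ≤ ε k := fun k => phaseStep_nonneg (hτ k) _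
  have hε : ∀ k, ε k ≤ 2 * π / τ k := fun k => (phaseStep_lt (hτ k) _).le
  have hsum := summable_of_le_div hτ hdouble two_pi_pos.le hε0 hε
  refine ⟨ε, hsum, fun k => ⟨hε0 k, phaseStep_lt (hτ k) _⟩, π, fun k => ?_⟩
  obtain ⟨n, hn⟩ := exists_int_sub_eq_mul_tsum_nat_add _ (fun k => (hτ k).ne') hsum k
  refine ⟨n, ?_⟩
  have htail := tsum_nat_add_le_of_le_div hτ hdouble two_pi_pos.le hε0 hε (k + 1)
  rw [hn, abs_of_nonneg (mul_nonneg (hτ k).le (tsum_nonneg fun j => hε0 _))]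
  calc τ k * ∑' j, ε (j + (k + 1)) ≤ τ k * (4 * π / τ (k + 1)) :=
        mul_le_mul_of_nonneg_left (htail.trans_eq (by ring)) (hτ k).le
    _ ≤ π * τ k ^ (-4 : ℝ) := mul_div_le_mul_rpow_neg_four (hτ k) pi_pos.le (hgrow k)
end
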